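/- arXiv:2104.15075 — 9 statements merged into one kernel-verified Lean document; each statement's English description precedes it below -/
import Mathlib

section
/- There exists a participatory budgeting instance with three projects, three voters, budget 5, no donations and no diversity constraints, such that: the bundle {p1, p3} is the unique score-maximizing feasible bundle (under the additive-sum score, i.e. sum over voters of sum of satisfactions), but after voter 3 donates one unit to project p2, the bundle {p1, p2} becomes the unique score-maximizing feasible bundle, and voter 2's additive utility for {p1, p2} is strictly less than voter 2's additive utility for {p1, p3}. Concretely: costs c(p1)=2, c(p2)=4, c(p3)=3; satisfactions sat_1 = (6,1,0), sat_2 = (2,4,5), sat_3 = (2,4,3); a bundle A is feasible if the sum over j ∈ A of max(0, c(j) − total donation to j) is at most 5. -/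
/-- Costs of the three projects. -/
def cost1 : Fin 3 → ℕ := ![2, 4, 3]

/-- Satisfaction of each of the three voters for each of the three projects. -/
def sat1 : Fin 3 → Fin 3 → ℕ := ![![6, 1, 0], ![2, 4, 5], ![2, 4, 3]]

/-- Feasibility w.r.t. total donations `d` and budget 5. -/
def feas1 (d : Fin 3 → ℕ) (A : Finset (Fin 3)) : Prop :=
  ∑ j ∈ A, (cost1 j - d j) ≤ 5

/-- Additive utility of voter `i` for bundle `A`. -/
def util1 (i : Fin 3) (A : Finset (Fin 3)) : ℕ := ∑ j ∈ A, sat1 i j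

/-- Additive-sum score of a bundle. -/
def score1 (A : Finset (Fin 3)) : ℕ := ∑ i : Fin 3, util1 i A

/-- Without donations, `{p1, p3}` is the unique additive-sum maximizer; after voter 3
donates one unit to `p2`, `{p1, p2}` becomes the unique maximizer, and voter 2's
additive utility strictly drops. -/
theorem stmt_1 :
    feas1 (fun _ => 0) {0, 2} ∧
    (∀ A, feas1 (fun _ => 0) A → A ≠ {0, 2} → score1 A < score1 {0, 2}) ∧
    feas1 ![0, 1, 0] {0, 1} ∧
    (∀ A, feas1 ![0, 1, 0] A → A ≠ {0, 1} → score1 A < score1 {0, 1}) ∧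
    util1 1 {0, 1} < util1 1 {0, 2} := by
  unfold feas1
  decide
end

section
/- In the same concrete instance but where voter 3 donates 1 unit to p2 (reducing its effective cost to 3), the bundle {p1, p2} is the unique feasible bundle maximizing the egalitarian-max score, and voter 2's maximum-satisfaction utility for {p1,p2} equals 4, which is strictly less than voter 2's utility 5 for the previous winner {p1,p3}. -/
/-- Donation-reduced costs: voter 3 donates 1 unit to `p2`. -/
def rcost3 : Fin 3 → ℕ := ![2, 3, 3]

def sat3 : Fin 3 → Fin 3 → ℕ := ![![6, 1, 0], ![2, 4, 5], ![2, 4, 3]]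

/-- Feasibility with the donation: total reduced cost at most 5. -/
def feas3 (A : Finset (Fin 3)) : Prop := ∑ j ∈ A, rcost3 j ≤ 5

/-- Egalitarian-max score. -/
def eMax3 (A : Finset (Fin 3)) : ℕ :=
  Finset.univ.inf' Finset.univ_nonempty (fun i : Fin 3 => A.sup (sat3 i))

/-- After the donation, `{p1, p2}` is the unique egalitarian-max winner, and voter 2's
max-utility for it is 4, strictly less than her utility 5 for the previous winner
`{p1, p3}`. -/
theorem stmt_3 :
    feas3 {0, 1} ∧
    (∀ A, feas3 A → A ≠ {0, 1} → eMax3 A < eMax3 {0, 1}) ∧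
    ({0, 1} : Finset (Fin 3)).sup (sat3 1) = 4 ∧
    ({0, 2} : Finset (Fin 3)).sup (sat3 1) = 5 ∧
    ({0, 1} : Finset (Fin 3)).sup (sat3 1) < ({0, 2} : Finset (Fin 3)).sup (sat3 1) := by
  refine ⟨by unfold feas3; decide, by intro A; unfold feas3 eMax3; revert A; decide, by decide, by decide, by decide⟩
end

section
/- Any aggregation rule R that maximizes a fixed donation-independent score function over feasible bundles (with a fixed tie-breaking) satisfies donation-project-monotonicity: if project j belongs to the winning bundle R(I), and a voter increases her donation to j producing instance I', then j belongs to the winning bundle R(I'). -/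
/-- A participatory budgeting instance with `n` voters, `m` projects and `t` types. -/
structure PBInst (n m t : ℕ) where
  cost : Fin m → ℕ
  tau : Fin m → Fin t → ℕ
  don : Fin n → Fin m → ℕ
  budget : ℕ
  lo : Fin t → ℕ
  hi : Fin t → ℕ

/-- Feasibility: donation-reduced total cost within budget, diversity constraints met. -/
def PBInst.feasible {n m t : ℕ} (I : PBInst n m t) (A : Finset (Fin m)) : Prop :=
  (∑ j ∈ A, (I.cost j - ∑ i : Fin n, I.don i j)) ≤ I.budget ∧
  ∀ z : Fin t, I.lo z ≤ ∑ j ∈ A, I.tau j z ∧ ∑ j ∈ A, I.tau j z ≤ I.hi z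

/-- `W` is the winner: it is feasible and every feasible bundle either has strictly
smaller score or ties and loses the fixed tie-break `tb`. -/
def IsWinner {n m t : ℕ} (I : PBInst n m t) (score tb : Finset (Fin m) → ℕ)
    (W : Finset (Fin m)) : Prop :=
  I.feasible W ∧
  ∀ A, I.feasible A → (score A < score W ∨ (score A = score W ∧ tb A ≤ tb W))

/-- Donation-project-monotonicity for score-maximizing rules with fixed tie-breaking:
if `j` is in the winner and a voter increases her donation to `j`, then `j` is still
in the winner of the modified instance. -/
theorem stmt_7 {n m t : ℕ} (I I' : PBInst n m t) (x : Fin n) (j : Fin m)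
    (hcost : I'.cost = I.cost) (htau : I'.tau = I.tau) (hB : I'.budget = I.budget)
    (hlo : I'.lo = I.lo) (hhi : I'.hi = I.hi)
    (hdon : ∀ (i : Fin n) (k : Fin m), ¬(i = x ∧ k = j) → I'.don i k = I.don i k)
    (hinc : I.don x j < I'.don x j)
    (score tb : Finset (Fin m) → ℕ) (htb : Function.Injective tb)
    (W W' : Finset (Fin m))
    (hW : IsWinner I score tb W) (hW' : IsWinner I' score tb W')
    (hj : j ∈ W) : j ∈ W' := by
  have hdk : ∀ k : Fin m, k ≠ j →
      (∑ i : Fin n, I'.don i k) = ∑ i : Fin n, I.don i k := by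
    intro k hk
    exact Finset.sum_congr rfl fun i _ => hdon i k (by tauto)
  have hdj : (∑ i : Fin n, I.don i j) ≤ ∑ i : Fin n, I'.don i j := by
    apply Finset.sum_le_sum
    intro i _
    by_cases h : i = x
    · subst h; exact le_of_lt hinc
    · rw [hdon i j (by tauto)]
  -- W is feasible in I'
  have hfeasW : I'.feasible W := by
    constructor
    · rw [hB]
      refine le_trans (Finset.sum_le_sum fun k _ => ?_) hW.1.1
      rw [hcost]
      by_cases h : k = j
      · subst h; exact Nat.sub_le_sub_left hdj _
      · rw [hdk k h]
    · intro z
      rw [hlo, hhi]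
      simpa [htau] using hW.1.2 z
  by_contra hj'
  -- W' is feasible in I (since j ∉ W')
  have hfeasW' : I.feasible W' := by
    constructor
    · rw [← hB]
      refine le_of_eq_of_le (Finset.sum_congr rfl fun k hk => ?_).symm hW'.1.1
      have hkj : k ≠ j := fun h => hj' (h ▸ hk)
      rw [hcost, hdk k hkj]
    · intro z
      rw [← hlo, ← hhi]
      simpa [htau] using hW'.1.2 z
  have h1 := hW.2 W' hfeasW'
  have h2 := hW'.2 W hfeasW
  have hsc : score W = score W' := by omega
  have htbeq : tb W = tb W' := by omega
  exact hj' (htb htbeq ▸ hj)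
end

section
/- No exhaustive aggregation rule that satisfies weak continuity can satisfy μ★-donation-voter-monotonicity for the additive utility μ⁺ or the maximum utility μ^max, even restricted to instances with satisfaction-consistent donations and no diversity constraints. That is, for any such rule there exists an instance I, a voter x, a project j, and a j-variant b'_x of x's donation vector with b'_x[j] = 0, such that μ★_x(R(I)) < μ★_x(R(I − b_x + b'_x)). -/
/-- A participatory budgeting instance (no diversity constraints): `m` projects with
costs, `n` voters with satisfaction functions and donation vectors, and a budget. -/
structure PBI where
  m : ℕ
  n : ℕ
  cost : Fin m → ℕ
  sat : Fin n → Fin m → ℕ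
  don : Fin n → Fin m → ℕ
  budget : ℕ

/-- Budget feasibility with donation-reduced costs. -/
def PBI.feasible (I : PBI) (A : Finset (Fin I.m)) : Prop :=
  ∑ j ∈ A, (I.cost j - ∑ i : Fin I.n, I.don i j) ≤ I.budget

/-- Replace voter `x`'s donation vector by its `j`-variant with value 0 at `j`
(i.e. the instance `I − b_x + b'_x` where `b'_x[j] = 0`). -/
def PBI.zeroDonAt (I : PBI) (x : Fin I.n) (j : Fin I.m) : PBI :=
  { I with don := fun i p => if i = x ∧ p = j then 0 else I.don i p }

/-- Add `k` new voters, each with satisfaction `c` for project `j`, satisfaction 0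
for every other project, and no donations. -/
def PBI.addVoters (I : PBI) (j : Fin I.m) (c k : ℕ) : PBI where
  m := I.m
  n := I.n + k
  cost := I.cost
  sat := fun i p => if h : (i : ℕ) < I.n then I.sat ⟨i, h⟩ p else if p = j then c else 0
  don := fun i p => if h : (i : ℕ) < I.n then I.don ⟨i, h⟩ p else 0
  budget := I.budget

/-- An aggregation rule maps each instance to a bundle. -/
def Rule := (I : PBI) → Finset (Fin I.m)

/-- The rule always outputs a feasible, exhaustive bundle. -/
def Exhaustive (R : Rule) : Prop :=
  ∀ I : PBI, I.feasible (R I) ∧ ∀ j ∉ R I, ¬ I.feasible (insert j (R I))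

/-- Weak continuity: if all voters have positive satisfaction for `j` and some
feasible bundle contains `j`, then adding enough new voters caring only about `j`
forces `j` into the winning bundle. -/
def WeakContinuity (R : Rule) : Prop :=
  ∀ (I : PBI) (j : Fin I.m), (∀ i, 0 < I.sat i j) → (∃ A, I.feasible A ∧ j ∈ A) →
    ∃ c k : ℕ, j ∈ R (I.addVoters j c k)

/-- Satisfaction-consistent donations: no donation to 0-satisfaction projects, and
strictly preferred projects receive strictly larger donations. -/
def SatConsistent (I : PBI) : Prop :=
  ∀ i : Fin I.n,
    (∀ p, I.sat i p = 0 → I.don i p = 0) ∧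
    (∀ p q, I.sat i q < I.sat i p → I.don i q < I.don i p)

/-- Additive utility `μ⁺`. -/
def uAdd (m : ℕ) (sat : Fin m → ℕ) (A : Finset (Fin m)) : ℕ := ∑ j ∈ A, sat j

/-- Maximum utility `μ^max`. -/
def uMax (m : ℕ) (sat : Fin m → ℕ) (A : Finset (Fin m)) : ℕ := A.sup sat

/-- `u`-donation-voter-monotonicity (restricted to satisfaction-consistent
instances): withdrawing one's entire donation to a single project never strictly
increases one's utility. -/
def DVM (R : Rule) (u : (m : ℕ) → (Fin m → ℕ) → Finset (Fin m) → ℕ) : Prop :=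
  ∀ I : PBI, SatConsistent I → ∀ (x : Fin I.n) (j : Fin I.m),
    u I.m (I.sat x) (R (I.zeroDonAt x j)) ≤ u I.m (I.sat x) (R I)

/-- The counterexample instance: two projects of cost 5 each, two voters with
opposite preferences, budget 2; each voter donates 2 to her favourite project and
1 to the other, so both reduced costs are 2 and only one project fits. -/
abbrev Iex : PBI where
  m := 2
  n := 2
  cost := fun _ => 5
  sat := fun i p => if (i : ℕ) = (p : ℕ) then 2 else 1
  don := fun i p => if (i : ℕ) = (p : ℕ) then 2 else 1
  budget := 2

lemma Iex_cons : SatConsistent Iex := by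
  unfold SatConsistent
  decide

lemma finsetFin2_cases : ∀ S : Finset (Fin 2),
    S = ∅ ∨ S = {0} ∨ S = {1} ∨ S = {0, 1} := by decide

lemma keyAux (R : Rule) (hEx : Exhaustive R)
    (u : (m : ℕ) → (Fin m → ℕ) → Finset (Fin m) → ℕ)
    (h00 : u 2 (Iex.sat 0) {0} = 2) (h01 : u 2 (Iex.sat 0) {1} = 1)
    (h10 : u 2 (Iex.sat 1) {0} = 1) (h11 : u 2 (Iex.sat 1) {1} = 2) :
    ¬ DVM R u := by
  intro hDVM
  -- the instance where voter 0 withdraws her donation to project 1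
  have hA1 : R (Iex.zeroDonAt 0 1) = ({0} : Finset (Fin 2)) := by
    obtain ⟨hf, hm⟩ := hEx (Iex.zeroDonAt 0 1)
    rcases finsetFin2_cases (R (Iex.zeroDonAt 0 1)) with h | h | h | h
    · exfalso
      refine hm (0 : Fin 2) (by rw [h]; exact Finset.notMem_empty _) ?_
      rw [h]; unfold PBI.feasible; decide
    · exact h
    · exfalso; rw [h] at hf; exact absurd hf (by unfold PBI.feasible; decide)
    · exfalso; rw [h] at hf; exact absurd hf (by unfold PBI.feasible; decide)
  -- the instance where voter 1 withdraws her donation to project 0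
  have hA2 : R (Iex.zeroDonAt 1 0) = ({1} : Finset (Fin 2)) := by
    obtain ⟨hf, hm⟩ := hEx (Iex.zeroDonAt 1 0)
    rcases finsetFin2_cases (R (Iex.zeroDonAt 1 0)) with h | h | h | h
    · exfalso
      refine hm (1 : Fin 2) (by rw [h]; exact Finset.notMem_empty _) ?_
      rw [h]; unfold PBI.feasible; decide
    · exfalso; rw [h] at hf; exact absurd hf (by unfold PBI.feasible; decide)
    · exact h
    · exfalso; rw [h] at hf; exact absurd hf (by unfold PBI.feasible; decide)
  have h1 := hDVM Iex Iex_cons 0 1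
  have h2 := hDVM Iex Iex_cons 1 0
  rw [hA1] at h1
  rw [hA2] at h2
  obtain ⟨hf0, hm0⟩ := hEx Iex
  rcases finsetFin2_cases (R Iex) with h | h | h | h
  · exact hm0 (0 : Fin 2) (by rw [h]; exact Finset.notMem_empty _) (by rw [h]; unfold PBI.feasible; decide)
  · rw [h] at h2; rw [h11, h10] at h2; omega
  · rw [h] at h1; rw [h00, h01] at h1; omega
  · rw [h] at hf0; exact absurd hf0 (by unfold PBI.feasible; decide)

/-- No exhaustive aggregation rule satisfying weak continuity satisfies
donation-voter-monotonicity, for the additive or the maximum utility, even with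
satisfaction-consistent donations and no diversity constraints. -/
theorem stmt_11 (R : Rule) (hEx : Exhaustive R) (hWC : WeakContinuity R) :
    ¬ DVM R uAdd ∧ ¬ DVM R uMax := by
  exact ⟨keyAux R hEx uAdd (by unfold uAdd; decide) (by unfold uAdd; decide) (by unfold uAdd; decide) (by unfold uAdd; decide),
         keyAux R hEx uMax (by unfold uMax; decide) (by unfold uMax; decide) (by unfold uMax; decide) (by unfold uMax; decide)⟩
end

section
/- Let R be any aggregation rule maximizing a donation-independent score over feasible bundles (with fixed tie-breaking). Then Pareto-R satisfies donation-project-monotonicity: if voter x increases her donation to project j and j was in the Pareto-R winner for the original instance, then j is in the Pareto-R winner for the modified instance. -/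
/-- The same instance with all donations removed (`I⁰`). -/
def PBInst.zeroDon {n m t : ℕ} (I : PBInst n m t) : PBInst n m t :=
  { I with don := fun _ _ => 0 }

/-- `A` μ-Pareto-dominates `B` (the utilities `μ` are donation-independent). -/
def ParetoDom {n m : ℕ} (μ : Fin n → Finset (Fin m) → ℕ) (A B : Finset (Fin m)) : Prop :=
  (∀ i, μ i B ≤ μ i A) ∧ ∃ i, μ i B < μ i A

/-- The candidate set 𝒳(I) of Pareto-R: the no-donation winner `A₀` together with all
bundles feasible for `I` that μ-Pareto-dominate `A₀`. -/
def XSet {n m t : ℕ} (I : PBInst n m t) (μ : Fin n → Finset (Fin m) → ℕ)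
    (A₀ A : Finset (Fin m)) : Prop :=
  A = A₀ ∨ (I.feasible A ∧ ParetoDom μ A A₀)

/-- `W` is the Pareto-R winner: a member of 𝒳(I) maximizing score (ties by `tb`). -/
def IsParetoWinner {n m t : ℕ} (I : PBInst n m t) (μ : Fin n → Finset (Fin m) → ℕ)
    (score tb : Finset (Fin m) → ℕ) (A₀ W : Finset (Fin m)) : Prop :=
  XSet I μ A₀ W ∧
  ∀ A, XSet I μ A₀ A → (score A < score W ∨ (score A = score W ∧ tb A ≤ tb W))

/-- Pareto-R satisfies donation-project-monotonicity: if `j` is in the Pareto-R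
winner and a voter increases her donation to `j`, then `j` is in the Pareto-R winner
of the modified instance. -/
theorem stmt_13 {n m t : ℕ} (I I' : PBInst n m t) (x : Fin n) (j : Fin m)
    (hcost : I'.cost = I.cost) (htau : I'.tau = I.tau) (hB : I'.budget = I.budget)
    (hlo : I'.lo = I.lo) (hhi : I'.hi = I.hi)
    (hdon : ∀ (i : Fin n) (k : Fin m), ¬(i = x ∧ k = j) → I'.don i k = I.don i k)
    (hinc : I.don x j < I'.don x j)
    (μ : Fin n → Finset (Fin m) → ℕ)
    (score tb : Finset (Fin m) → ℕ) (htb : Function.Injective tb)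
    (A₀ W W' : Finset (Fin m))
    (hA₀ : IsWinner I.zeroDon score tb A₀)
    (hW : IsParetoWinner I μ score tb A₀ W)
    (hW' : IsParetoWinner I' μ score tb A₀ W')
    (hj : j ∈ W) : j ∈ W' := by

  -- donation sums: for k ≠ j equal, for j it increases
  have hdonsum : ∀ k : Fin m, k ≠ j → (∑ i : Fin n, I'.don i k) = ∑ i : Fin n, I.don i k := by
    intro k hk
    exact Finset.sum_congr rfl fun i _ => hdon i k (fun h => hk h.2)
  have hdonle : ∀ k : Fin m, (∑ i : Fin n, I.don i k) ≤ ∑ i : Fin n, I'.don i k := by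
    intro k
    by_cases hk : k = j
    · rw [hk]
      apply Finset.sum_le_sum
      intro i _
      by_cases hi : i = x
      · subst hi; exact hinc.le
      · exact (hdon i j (fun h => hi h.1)).ge
    · exact (hdonsum k hk).ge
  -- feasibility monotone
  have hfeas_mono : ∀ A : Finset (Fin m), I.feasible A → I'.feasible A := by
    intro A ⟨h1, h2⟩
    refine ⟨?_, ?_⟩
    · rw [hB]
      refine le_trans (Finset.sum_le_sum fun k _ => ?_) h1
      rw [hcost]
      exact Nat.sub_le_sub_left (hdonle k) _
    · intro z
      rw [htau, hlo, hhi]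
      exact h2 z
  -- feasibility equal when j ∉ A
  have hfeas_eq : ∀ A : Finset (Fin m), j ∉ A → I'.feasible A → I.feasible A := by
    intro A hjA ⟨h1, h2⟩
    refine ⟨?_, ?_⟩
    · rw [← hB]
      refine le_of_eq_of_le ?_ h1
      apply Finset.sum_congr rfl
      intro k hk
      rw [hcost, hdonsum k (fun h => hjA (h ▸ hk))]
    · intro z
      rw [← htau, ← hlo, ← hhi]
      exact h2 z
  -- XSet I ⊆ XSet I'
  have hX : ∀ A, XSet I μ A₀ A → XSet I' μ A₀ A := by
    intro A hA
    rcases hA with h | ⟨hf, hd⟩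
    · exact Or.inl h
    · exact Or.inr ⟨hfeas_mono A hf, hd⟩
  by_cases hW'X : XSet I μ A₀ W'
  · -- W' in both sets; both maximal ⇒ W = W'
    rcases hW.2 W' hW'X with h1 | ⟨hs1, ht1⟩
    · rcases hW'.2 W (hX W hW.1) with h2 | ⟨hs2, _⟩
      · exact absurd h2 (lt_asymm h1)
      · omega
    · rcases hW'.2 W (hX W hW.1) with h2 | ⟨hs2, ht2⟩
      · omega
      · have : W = W' := htb (le_antisymm ht2 ht1)
        exact this ▸ hj
  · -- W' new: must contain j
    rcases hW'.1 with h | ⟨hf, hd⟩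
    · exact absurd (Or.inl h) hW'X
    · by_contra hjW'
      exact hW'X (Or.inr ⟨hfeas_eq W' hjW' hf, hd⟩)
end

section
/- In the egalitarian rules, adding a bundle element never decreases a voter's utility: for the additive utility μ⁺ and the maximum utility μ^max, if A ⊆ B are bundles, then μ_i(A) ≤ μ_i(B) for every voter i; consequently both utility functions are monotonic, and hence Sequential-R satisfies μ⁺- and μ^max-donation-no-harm for every base rule R. -/
/-- Both the additive utility `μ⁺` and the maximum utility `μ^max` are monotonic
(adding projects never decreases a voter's utility); consequently, any Sequential-R
(whose output on `I⁰` is a subset of its output on `I`) satisfies `μ⁺`- and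
`μ^max`-donation-no-harm. -/
theorem stmt_15 {V C : Type} [DecidableEq C] (sat : V → C → ℕ) :
    (∀ (i : V) (A B : Finset C), A ⊆ B → ∑ j ∈ A, sat i j ≤ ∑ j ∈ B, sat i j) ∧
    (∀ (i : V) (A B : Finset C), A ⊆ B → A.sup (sat i) ≤ B.sup (sat i)) ∧
    (∀ {Inst : Type} (SeqR : Inst → Finset C) (zeroDon : Inst → Inst),
      (∀ I, SeqR (zeroDon I) ⊆ SeqR I) →
      ∀ (I : Inst) (x : V),
        (∑ j ∈ SeqR (zeroDon I), sat x j ≤ ∑ j ∈ SeqR I, sat x j) ∧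
        ((SeqR (zeroDon I)).sup (sat x) ≤ (SeqR I).sup (sat x))) := by
  refine ⟨fun i A B h => Finset.sum_le_sum_of_subset h,
    fun i A B h => Finset.sup_mono h,
    fun {Inst} SeqR zeroDon hsub I x =>
      ⟨Finset.sum_le_sum_of_subset (hsub I), Finset.sup_mono (hsub I)⟩⟩
end

section
/- In the hardness-reduction instance from Vertex Cover: given a graph G = (U, E) in which every vertex cover has size at least 2, construct the PB instance with projects U ∪ {u₀}, one voter w with satisfaction 1 for every project, unit costs for projects in U, cost k for u₀, budget k, types indexed by edges where τ_{u₀} = all-ones and τ_{u_i}[z] = 1 iff u_i ∈ e_z, lower bounds all 1 and upper bounds all 2. Then G has a vertex cover of size at most k if and only if the singleton bundle {u₀} is not a winner under the additive-sum rule R^+_Σ (i.e., some feasible bundle has strictly larger total satisfaction than {u₀}). -/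
/-- Costs in the reduction: vertex-projects cost 1, the extra project `u₀ = none`
costs `k`. -/
def vcCost {U : Type} (k : ℕ) : Option U → ℕ := fun p => p.elim k (fun _ => 1)

/-- Types are indexed by edges: `u₀` has every type; a vertex-project has type `e`
iff the vertex lies on `e`. -/
def vcTau {U : Type} [DecidableEq U] : Option U → Finset U → ℕ :=
  fun p e => p.elim 1 (fun u => if u ∈ e then 1 else 0)

/-- Feasibility: total cost at most `k`, and for every edge `e` the number of chosen
projects of type `e` is between 1 and 2. -/
def vcFeas {U : Type} [DecidableEq U] (E : Finset (Finset U)) (k : ℕ)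
    (A : Finset (Option U)) : Prop :=
  (∑ p ∈ A, vcCost k p ≤ k) ∧
  ∀ e ∈ E, 1 ≤ ∑ p ∈ A, vcTau p e ∧ ∑ p ∈ A, vcTau p e ≤ 2

/-- The single voter has satisfaction 1 for every project, so the additive-sum score
of a bundle is its total number of projects. -/
def vcScore {U : Type} (A : Finset (Option U)) : ℕ := ∑ _p ∈ A, 1

/-- Reduction from Vertex Cover to non-winner testing for `R^+_Σ`: if every vertex
cover of `G = (U, E)` has size at least 2, then `G` has a vertex cover of size at
most `k` iff `{u₀}` is not a winner, i.e. some feasible bundle has strictly larger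
additive-sum score. -/
theorem stmt_16 {U : Type} [Fintype U] [DecidableEq U]
    (E : Finset (Finset U)) (k : ℕ)
    (hE : ∀ e ∈ E, e.card = 2)
    (hvc : ∀ S : Finset U, (∀ e ∈ E, ∃ u ∈ S, u ∈ e) → 2 ≤ S.card) :
    (∃ S : Finset U, (∀ e ∈ E, ∃ u ∈ S, u ∈ e) ∧ S.card ≤ k) ↔
      ∃ A : Finset (Option U), vcFeas E k A ∧
        vcScore ({none} : Finset (Option U)) < vcScore A := by
  have hscore : ∀ A : Finset (Option U), vcScore A = A.card := by
    intro A; simp [vcScore]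
  constructor
  · rintro ⟨S, hcov, hcard⟩
    refine ⟨S.image some, ⟨?_, ?_⟩, ?_⟩
    · rw [Finset.sum_image (by simp)]
      simpa [vcCost] using hcard
    · intro e he
      rw [Finset.sum_image (by simp)]
      constructor
      · obtain ⟨u, huS, hue⟩ := hcov e he
        calc 1 = vcTau (some u) e := by simp [vcTau, hue]
        _ ≤ ∑ u ∈ S, vcTau (some u) e :=
            Finset.single_le_sum (f := fun u => vcTau (some u) e)
              (fun _ _ => Nat.zero_le _) huS
      · have : ∑ u ∈ S, vcTau (some u) e = (S ∩ e).card := by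
          simp [vcTau, Finset.sum_ite_mem]
        rw [this]
        calc (S ∩ e).card ≤ e.card := Finset.card_le_card Finset.inter_subset_right
        _ = 2 := hE e he
    · rw [hscore, hscore, Finset.card_image_of_injective _ (Option.some_injective U),
        Finset.card_singleton]
      exact lt_of_lt_of_le (by norm_num) (hvc S hcov)
  · rintro ⟨A, ⟨hcost, hτ⟩, hsc⟩
    rw [hscore, hscore, Finset.card_singleton] at hsc
    by_cases hn : none ∈ A
    · exfalso
      have h1 : ∑ p ∈ A, vcCost k p = k + ∑ p ∈ A.erase none, vcCost k p := by
        rw [← Finset.add_sum_erase _ _ hn]; rfl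
      have h2 : (A.erase none).Nonempty := by
        rw [← Finset.card_pos, Finset.card_erase_of_mem hn]; omega
      obtain ⟨p, hp⟩ := h2
      have hp1 : 1 ≤ ∑ p ∈ A.erase none, vcCost k p := by
        have hpne : p ≠ none := Finset.ne_of_mem_erase hp
        obtain ⟨u, rfl⟩ := Option.ne_none_iff_exists'.mp hpne
        calc 1 = vcCost k (some u) := rfl
        _ ≤ _ := Finset.single_le_sum (fun _ _ => Nat.zero_le _) hp
      omega
    · set S : Finset U := Finset.univ.filter (fun u => some u ∈ A) with hS
      have hAS : A = S.image some := by
        ext p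
        match p with
        | none => simp [hn]
        | some u => simp [hS]
      refine ⟨S, ?_, ?_⟩
      · intro e he
        have h1 := (hτ e he).1
        rw [hAS, Finset.sum_image (by simp)] at h1
        by_contra hno
        push_neg at hno
        have : ∑ u ∈ S, vcTau (some u) e = 0 :=
          Finset.sum_eq_zero (fun u hu => by simp [vcTau, hno u hu])
        omega
      · have : S.card = A.card := by
          rw [hAS, Finset.card_image_of_injective _ (Option.some_injective U)]
        have hc : ∑ p ∈ A, vcCost k p = A.card := by
          conv_lhs => rw [hAS]
          rw [Finset.sum_image (by simp), ← this]
          simp [vcCost]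
        omega
end

section
/- In the hardness-reduction instance for the egalitarian rules from Vertex Cover: given graph G = (U, E) with U = {u_1,…,u_n} and E = {e_1,…,e_m}, construct a PB instance with projects U ∪ {u₀}, all of unit cost, budget k, voters e_1,…,e_m where sat_{e_j}(u_i) = 1 if u_i ∈ e_j and 0 otherwise (and sat_{e_j}(u₀) = 0), no donations and no diversity constraints. Then G has a vertex cover of size at most k if and only if the bundle {u₀} is not a co-winner under the max-min rule (i.e., there is a feasible bundle A with min_{e∈E} max_{j∈A} sat_e(j) > 0). -/
/-- Satisfaction of the voter corresponding to edge `e`: 1 for a vertex-project on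
`e`, 0 otherwise, and 0 for the extra project `u₀ = none`. -/
def satE {U : Type} [DecidableEq U] (e : Finset U) : Option U → ℕ :=
  fun p => p.elim 0 (fun u => if u ∈ e then 1 else 0)

/-- Reduction from Vertex Cover for the egalitarian max-min rule: with all projects
of unit cost, budget `k`, no donations and no diversity constraints, `G = (U, E)` has
a vertex cover of size at most `k` iff `{u₀}` (whose max-min score is 0) is not a
co-winner, i.e. some feasible bundle has strictly positive max-min score. -/
theorem stmt_17 {U : Type} [Fintype U] [DecidableEq U]
    (E : Finset (Finset U)) (k : ℕ) (hE : E.Nonempty)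
    (hcard : ∀ e ∈ E, e.card = 2) :
    (∃ S : Finset U, (∀ e ∈ E, ∃ u ∈ S, u ∈ e) ∧ S.card ≤ k) ↔
      ∃ A : Finset (Option U), A.card ≤ k ∧
        0 < E.inf' hE (fun e => A.sup (satE e)) := by
  constructor
  · rintro ⟨S, hcover, hk⟩
    refine ⟨S.image some, le_trans Finset.card_image_le hk, ?_⟩
    rw [Finset.lt_inf'_iff]
    intro e he
    obtain ⟨u, huS, hue⟩ := hcover e he
    calc 0 < satE e (some u) := by simp [satE, hue]
      _ ≤ (S.image some).sup (satE e) :=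
        Finset.le_sup (Finset.mem_image_of_mem some huS)
  · rintro ⟨A, hk, hpos⟩
    rw [Finset.lt_inf'_iff] at hpos
    refine ⟨Finset.univ.filter (fun u => some u ∈ A), ?_, ?_⟩
    · intro e he
      obtain ⟨p, hpA, hp⟩ := Finset.lt_sup_iff.mp (hpos e he)
      match p with
      | none => simp [satE] at hp
      | some u =>
        refine ⟨u, by simp [hpA], ?_⟩
        by_contra h
        simp [satE, h] at hp
    · refine le_trans ?_ hk
      apply Finset.card_le_card_of_injOn some
      · intro u hu; simpa using (Finset.mem_filter.mp hu).2
      · intro a _ b _ h; exact Option.some.inj h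
end

section
/- The Knapsack problem reduces to non-winner testing for R^+_Σ without diversity constraints: given item weights s_1,…,s_n, values v_1,…,v_n, capacity S and target K, construct the PB instance with one project per item (cost s_j), one extra project α with cost S, one voter whose satisfaction for item-project j is v_j and for α is K − 1, budget S, no donations, no types. Then there is a subset J of items with Σ_{j∈J} s_j ≤ S and Σ_{j∈J} v_j ≥ K if and only if {α} is not a winner under the additive-sum rule. -/
/-- Costs in the Knapsack reduction: item-project `j` costs `s j`, and the extra
project `α = none` costs `S`. -/
def ksCost {n : ℕ} (s : Fin n → ℕ) (S : ℕ) : Option (Fin n) → ℕ :=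
  fun p => p.elim S s

/-- The single voter's satisfaction: `v j` for item-project `j`, `K - 1` for `α`. -/
def ksSat {n : ℕ} (v : Fin n → ℕ) (K : ℕ) : Option (Fin n) → ℕ :=
  fun p => p.elim (K - 1) v

/-- Knapsack reduces to non-winner testing for `R^+_Σ` without diversity constraints:
there is a subset of items of total weight at most `S` and total value at least `K`
iff `{α}` is not a winner of the additive-sum rule, i.e. some feasible bundle has
score strictly greater than `K − 1`. -/
theorem stmt_18 {n : ℕ} (s v : Fin n → ℕ) (S K : ℕ)
    (hK : 1 ≤ K) (hs : ∀ j, 1 ≤ s j) :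
    (∃ J : Finset (Fin n), ∑ j ∈ J, s j ≤ S ∧ K ≤ ∑ j ∈ J, v j) ↔
      ∃ A : Finset (Option (Fin n)),
        ∑ p ∈ A, ksCost s S p ≤ S ∧ K - 1 < ∑ p ∈ A, ksSat v K p := by
  constructor
  · rintro ⟨J, hw, hv⟩
    refine ⟨J.image some, ?_, ?_⟩
    · rw [Finset.sum_image (by simp)]
      simpa [ksCost] using hw
    · rw [Finset.sum_image (by simp)]
      have : ∑ j ∈ J, ksSat v K (some j) = ∑ j ∈ J, v j := by simp [ksSat]
      rw [this]
      omega
  · rintro ⟨A, hw, hv⟩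
    by_cases hα : none ∈ A
    · -- then A = {none}, since any extra item-project would exceed budget
      have hA : A = {none} := by
        by_contra h
        obtain ⟨p, hp, hpne⟩ : ∃ p ∈ A, p ≠ none := by
          by_contra hc
          push_neg at hc
          exact h (Finset.eq_singleton_iff_unique_mem.mpr ⟨hα, hc⟩)
        obtain ⟨j, rfl⟩ := Option.ne_none_iff_exists'.mp hpne
        have hsub : {none, some j} ⊆ A := by
          intro x hx; simp at hx; rcases hx with rfl | rfl <;> assumption
        have := Finset.sum_le_sum_of_subset (f := ksCost s S) hsub
        have h1 : ∑ p ∈ ({none, some j} : Finset (Option (Fin n))), ksCost s S p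
            = S + s j := by simp [ksCost]
        have := hs j
        omega
      rw [hA] at hv
      simp [ksSat] at hv
    · -- A avoids none; pull back to items
      refine ⟨A.preimage some (Set.injOn_of_injective (Option.some_injective _)), ?_, ?_⟩
      · have h1 : ∑ j ∈ A.preimage some (Set.injOn_of_injective (Option.some_injective _)),
            ksCost s S (some j) = ∑ p ∈ A, ksCost s S p := by
          apply Finset.sum_preimage
          intro x hx hx'
          exfalso
          rcases x with _ | j
          · exact hα hx
          · exact hx' ⟨j, rfl⟩
        have : ∑ j ∈ A.preimage some (Set.injOn_of_injective (Option.some_injective _)),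
            s j = ∑ p ∈ A, ksCost s S p := by
          rw [← h1]; rfl
        omega
      · have h1 : ∑ j ∈ A.preimage some (Set.injOn_of_injective (Option.some_injective _)),
            ksSat v K (some j) = ∑ p ∈ A, ksSat v K p := by
          apply Finset.sum_preimage
          intro x hx hx'
          exfalso
          rcases x with _ | j
          · exact hα hx
          · exact hx' ⟨j, rfl⟩
        have : ∑ j ∈ A.preimage some (Set.injOn_of_injective (Option.some_injective _)),
            v j = ∑ p ∈ A, ksSat v K p := by
          rw [← h1]; rfl
        omega
end
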